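/- Let A be an assembly with a Guilbaud voting system 𝓔 and a profile assignment π : A → ZMod 6. If there exists p ∈ ZMod 6 such that both coalitions {v | π v ∈ {p, p+1, p+2}} and {v | π v ∈ {p+1, p+2, p+3}} are efficient, then the collective preference relation ≻ on the three candidates is a strict linear order (irreflexive, transitive, and total on distinct candidates). -/

import Mathlib

/-- The rank (position, 0 = first) of candidate `x` in the ranking labeled `p`.
Profile 1 is a>b>c, 2 is a>c>b, 3 is c>a>b, 4 is c>b>a, 5 is b>c>a, 0 is b>a>c,
with candidates a = 0, b = 1, c = 2 in `Fin 3`. -/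
def rank (p : ZMod 6) : Fin 3 → Fin 3 :=
  match p.val with
  | 0 => ![1, 0, 2]  -- b>a>c
  | 1 => ![0, 1, 2]  -- a>b>c
  | 2 => ![0, 2, 1]  -- a>c>b
  | 3 => ![1, 2, 0]  -- c>a>b
  | 4 => ![2, 1, 0]  -- c>b>a
  | _ => ![2, 0, 1]  -- b>c>a

/-- The strict linear order on candidates given by profile `p`: `x` is ranked above `y`. -/
def pref (p : ZMod 6) (x y : Fin 3) : Prop := rank p x < rank p y

/-- The collective preference: `x ≻ y` iff the coalition of voters preferring `x` to `y`
is efficient. -/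
def collPref {A : Type*} (𝓔 : Set (Set A)) (π : A → ZMod 6) (x y : Fin 3) : Prop :=
  {v : A | pref (π v) x y} ∈ 𝓔

/-!
Each pairwise preference `x ≻ y` (for `x ≠ y`) is held by the voters whose profiles form an arc
`{q, q + 1, q + 2}` of three consecutive profiles on the hexagon `ZMod 6`, and the complement of
the arc at `q` is the arc at `q + 3`. By (C1), exactly one of any two antipodal arcs is efficient,
so knowing that the arcs at `p` and `p + 1` are efficient fixes the status of all six arcs up to
one binary choice, and in either case the efficient arcs are exactly those containing a single
profile `s`. Hence the collective preference coincides with the linear order `pref s`.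
-/

/-- Conditions (C1) and (C2) of a Guilbaud voting system. -/
structure IsGuilbaud {A : Type*} (𝓔 : Set (Set A)) : Prop where
  mem_iff_compl_not_mem : ∀ K, K ∈ 𝓔 ↔ Kᶜ ∉ 𝓔
  mem_of_subset : ∀ {K L}, K ∈ 𝓔 → K ⊆ L → L ∈ 𝓔

namespace IsGuilbaud

variable {A B : Type*} {𝓔 : Set (Set A)}

theorem empty_not_mem (h : IsGuilbaud 𝓔) : ∅ ∉ 𝓔 := fun hempty =>
  (h.mem_iff_compl_not_mem ∅).1 hempty (h.mem_of_subset hempty (Set.empty_subset _))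

theorem map (h : IsGuilbaud 𝓔) (f : A → B) : IsGuilbaud {S : Set B | f ⁻¹' S ∈ 𝓔} where
  mem_iff_compl_not_mem S := h.mem_iff_compl_not_mem (f ⁻¹' S)
  mem_of_subset hS hST := h.mem_of_subset hS (Set.preimage_mono hST)

end IsGuilbaud

def arc (q : ZMod 6) : Set (ZMod 6) := {q, q + 1, q + 2}

instance (q : ZMod 6) : DecidablePred (· ∈ arc q) := fun r =>
  inferInstanceAs (Decidable (r = q ∨ r = q + 1 ∨ r = q + 2))

theorem add_mem_arc_add (p s q : ZMod 6) : p + s ∈ arc (p + q) ↔ s ∈ arc q := by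
  simp only [arc, Set.mem_insert_iff, Set.mem_singleton_iff, add_assoc, add_right_inj]

theorem compl_arc (q : ZMod 6) : (arc q)ᶜ = arc (q + 3) := by
  ext r
  revert q r
  decide

theorem exists_setOf_pref_eq_arc {x y : Fin 3} (h : x ≠ y) : ∃ q, {r | pref r x y} = arc q := by
  simp only [Set.ext_iff, Set.mem_ofPred_eq, pref]
  revert x y
  decide

theorem rank_injective (p : ZMod 6) : Function.Injective (rank p) := by
  revert p
  decide

theorem pref_irreflexive (p : ZMod 6) : Irreflexive (pref p) := fun x => lt_irrefl (rank p x)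

theorem pref_transitive (p : ZMod 6) : Transitive (pref p) := fun _ _ _ => lt_trans

theorem pref_total (p : ZMod 6) {x y : Fin 3} (h : x ≠ y) : pref p x y ∨ pref p y x :=
  lt_or_gt_of_ne ((rank_injective p).ne h)

theorem exists_forall_iff_mem_arc_of_zero {E : ZMod 6 → Prop} (hE : ∀ q, E q ↔ ¬E (q + 3))
    (h0 : E 0) (h1 : E 1) : ∃ s, ∀ q, E q ↔ s ∈ arc q := by
  have h3 : ¬E 3 := (hE 0).1 h0
  have h4 : ¬E 4 := (hE 1).1 h1
  have cases : ∀ q : ZMod 6, q = 0 ∨ q = 1 ∨ q = 2 ∨ q = 3 ∨ q = 4 ∨ q = 5 := by decide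
  by_cases h2 : E 2
  · have h5 : ¬E 5 := (hE 2).1 h2
    refine ⟨2, fun q => ?_⟩
    rcases cases q with rfl | rfl | rfl | rfl | rfl | rfl <;>
      simp only [h0, h1, h2, h3, h4, h5, true_iff, false_iff] <;> decide
  · have h5 : E 5 := not_not.1 (mt (hE 2).2 h2)
    refine ⟨1, fun q => ?_⟩
    rcases cases q with rfl | rfl | rfl | rfl | rfl | rfl <;>
      simp only [h0, h1, h2, h3, h4, h5, true_iff, false_iff] <;> decide

theorem exists_forall_iff_mem_arc {E : ZMod 6 → Prop} (hE : ∀ q, E q ↔ ¬E (q + 3))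
    {p : ZMod 6} (hp : E p) (hp1 : E (p + 1)) : ∃ s, ∀ q, E q ↔ s ∈ arc q := by
  obtain ⟨s, hs⟩ := exists_forall_iff_mem_arc_of_zero (E := fun q => E (p + q))
    (fun q => by simpa only [add_assoc] using hE (p + q)) (by rwa [add_zero]) hp1
  refine ⟨p + s, fun q => ?_⟩
  rw [← add_sub_cancel p q, add_mem_arc_add]
  exact hs (q - p)

namespace IsGuilbaud

variable {𝓕 : Set (Set (ZMod 6))}

theorem exists_forall_arc_mem_iff (h : IsGuilbaud 𝓕) {p : ZMod 6} (hp : arc p ∈ 𝓕)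
    (hp1 : arc (p + 1) ∈ 𝓕) : ∃ s, ∀ q, arc q ∈ 𝓕 ↔ s ∈ arc q :=
  exists_forall_iff_mem_arc (fun q => by rw [h.mem_iff_compl_not_mem, compl_arc]) hp hp1

theorem exists_forall_setOf_pref_mem_iff (h : IsGuilbaud 𝓕) {p : ZMod 6} (hp : arc p ∈ 𝓕)
    (hp1 : arc (p + 1) ∈ 𝓕) : ∃ s, ∀ x y, {r | pref r x y} ∈ 𝓕 ↔ pref s x y := by
  obtain ⟨s, hs⟩ := h.exists_forall_arc_mem_iff hp hp1
  refine ⟨s, fun x y => ?_⟩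
  rcases eq_or_ne x y with rfl | hxy
  · rw [Set.eq_empty_of_forall_notMem (s := {r | pref r x x}) fun r => pref_irreflexive r x]
    exact iff_of_false h.empty_not_mem (pref_irreflexive s x)
  · obtain ⟨q, hq⟩ := exists_setOf_pref_eq_arc hxy
    rw [hq, hs q, ← hq, Set.mem_ofPred_eq]

end IsGuilbaud

theorem conditionC_implies_linear {A : Type*} (𝓔 : Set (Set A))
    (hC1 : ∀ K : Set A, K ∈ 𝓔 ↔ Kᶜ ∉ 𝓔)
    (hC2 : ∀ K L : Set A, K ∈ 𝓔 → K ⊆ L → L ∈ 𝓔)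
    (π : A → ZMod 6)
    (hC : ∃ p : ZMod 6,
      {v : A | π v ∈ ({p, p + 1, p + 2} : Set (ZMod 6))} ∈ 𝓔 ∧
      {v : A | π v ∈ ({p + 1, p + 2, p + 3} : Set (ZMod 6))} ∈ 𝓔) :
    Irreflexive (collPref 𝓔 π) ∧ Transitive (collPref 𝓔 π) ∧
      ∀ x y : Fin 3, x ≠ y → collPref 𝓔 π x y ∨ collPref 𝓔 π y x := by
  obtain ⟨p, hp, hp1⟩ := hC
  have hG : IsGuilbaud {S : Set (ZMod 6) | π ⁻¹' S ∈ 𝓔} :=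
    IsGuilbaud.map ⟨hC1, hC2 _ _⟩ π
  have harc : arc (p + 1) = {p + 1, p + 2, p + 3} := by
    norm_num [arc, add_assoc]
  obtain ⟨s, hs⟩ := hG.exists_forall_setOf_pref_mem_iff hp (harc ▸ hp1)
  have hcoll : collPref 𝓔 π = pref s := funext₂ fun x y => propext (hs x y)
  rw [hcoll]
  exact ⟨pref_irreflexive s, pref_transitive s, fun _ _ => pref_total s⟩
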